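/- Let X be a complex Banach space, 1 < p < ∞, and let A be a constant such that for every ε ∈ {−1,1}^ℕ the conjugate function operator T_{P(ε)} with respect to the order P(ε) on ℤ^{∞*} satisfies ‖T_{P(ε)} f‖_{L^p(𝕋^ℕ,X)} ≤ A ‖f‖_{L^p(𝕋^ℕ,X)} for all X-valued trigonometric polynomials f on 𝕋^ℕ. Then for every n ≥ 1, finite sets K_k ⊆ ℤ^k \ ℤ^{k−1} (1 ≤ k ≤ n), coefficients a_J ∈ X, and every ε ∈ {−1,1}^ℕ, one has ‖∑_{k=1}^n ε_k (∑_{J∈K_k} a_J χ_J)‖_{L^p(𝕋^ℕ,X)} ≤ A² ‖∑_{k=1}^n ∑_{J∈K_k} a_J χ_J‖_{L^p(𝕋^ℕ,X)}. -/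
import Mathlib


open Complex MeasureTheory
open scoped ENNReal

instance : Fact (0 < 2 * Real.pi) := ⟨by positivity⟩

/-- `ℤ^{∞*} = ⊕_{n≥1} ℤ`, the dual group of `𝕋^ℕ` (the coordinate of Lean index `k : ℕ`
represents the paper's coordinate `j_{k+1}`). -/
abbrev Zinf := ℕ →₀ ℤ

/-- The infinite torus `𝕋^ℕ`, a countable product of circle groups. -/
abbrev TorusInf := ℕ → AddCircle (2 * Real.pi)

/-- `n(J)`: the largest `n ≥ 1` such that `j_n ≠ 0`, and `n(0) = 0`. -/
noncomputable def nIdx (J : Zinf) : ℕ := by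
  classical exact if h : J.support.Nonempty then J.support.max' h + 1 else 0

/-- `j_{n(J)}`: the last nonzero coordinate of `J` (and `0` if `J = 0`). -/
noncomputable def lastCoeff (J : Zinf) : ℤ := J (nIdx J - 1)

/-- The order `P(ε) = {J : ε_{n(J)} j_{n(J)} > 0} ∪ {0}`. -/
def Pe (ε : ℕ → ℤ) : Set Zinf := {J | J ≠ 0 ∧ 0 < ε (nIdx J) * lastCoeff J} ∪ {0}

/-- `ℤ^n = {J ∈ ℤ^{∞*} : n(J) ≤ n}`. -/
def Zn (n : ℕ) : Set Zinf := {J | nIdx J ≤ n}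

/-- The signum function of an order `Q`. -/
noncomputable def sgnOrder {Γ : Type*} [AddCommGroup Γ] (Q : Set Γ) (x : Γ) : ℝ := by
  classical exact if x = 0 then 0 else if x ∈ Q then 1 else -1

/-- The character `χ_J(θ) = ∏_n e^{i j_n θ_n}` of `𝕋^ℕ` attached to `J ∈ ℤ^{∞*}`. -/
noncomputable def charJ (J : Zinf) (θ : TorusInf) : ℂ :=
  ∏ k ∈ J.support, (fourier (J k) (θ k) : ℂ)

lemma nIdx_zero : nIdx (0 : Zinf) = 0 := by
  classical
  simp [nIdx]

lemma lastCoeff_ne_zero {J : Zinf} (hJ : J ≠ 0) : lastCoeff J ≠ 0 := by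
  classical
  have hs : J.support.Nonempty := Finsupp.support_nonempty_iff.mpr hJ
  rw [lastCoeff, nIdx, dif_pos hs, Nat.add_sub_cancel]
  simpa using J.support.max'_mem hs

lemma mem_Pe_iff {ε : ℕ → ℤ} {J : Zinf} (hJ : J ≠ 0) :
    J ∈ Pe ε ↔ 0 < ε (nIdx J) * lastCoeff J := by
  simp [Pe, hJ]

lemma sgn_mul_sgn {ε : ℕ → ℤ} (hε : ∀ k, ε k = 1 ∨ ε k = -1) {J : Zinf} (hJ : J ≠ 0) :
    sgnOrder (Pe ε) J * sgnOrder (Pe (fun _ => 1)) J = (ε (nIdx J) : ℝ) := by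
  classical
  have hj : lastCoeff J ≠ 0 := lastCoeff_ne_zero hJ
  have h1 : J ∈ Pe (fun _ => 1) ↔ 0 < lastCoeff J := by
    rw [mem_Pe_iff hJ]; simp
  have h2 : J ∈ Pe ε ↔ 0 < ε (nIdx J) * lastCoeff J := mem_Pe_iff hJ
  simp only [sgnOrder, if_neg hJ]
  rcases hε (nIdx J) with he | he <;> rcases lt_or_gt_of_ne hj with hl | hl
  · rw [if_neg (by rw [h2, he]; omega), if_neg (by rw [h1]; omega), he]
    norm_num
  · rw [if_pos (by rw [h2, he]; omega), if_pos (by rw [h1]; omega), he]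
    norm_num
  · rw [if_pos (by rw [h2, he]; omega), if_neg (by rw [h1]; omega), he]
    norm_num
  · rw [if_neg (by rw [h2, he]; omega), if_pos (by rw [h1]; omega), he]
    norm_num

/-- Let `X` be a complex Banach space, `1 < p < ∞`, and `A ≥ 0` a constant such that for
every sign sequence `ε` the conjugate function operator `T_{P(ε)}` is bounded by `A` on
`X`-valued trigonometric polynomials in `L^p(𝕋^ℕ, X)` (`μ` being the normalized Haar
measure).  Then for all `n ≥ 1`, finite sets `K_k ⊆ ℤ^k \ ℤ^{k−1}` `(1 ≤ k ≤ n)`,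
coefficients `a_J ∈ X`, and every `ε ∈ {−1,1}^ℕ`,
`‖∑_{k=1}^n ε_k ∑_{J∈K_k} a_J χ_J‖_{L^p} ≤ A² ‖∑_{k=1}^n ∑_{J∈K_k} a_J χ_J‖_{L^p}`. -/
theorem martingale_transform_bound_of_conjugation_bound
    {X : Type*} [NormedAddCommGroup X] [NormedSpace ℂ X] [CompleteSpace X]
    (p : ℝ≥0∞) (hp1 : 1 < p) (hp_top : p ≠ ⊤)
    (μ : Measure TorusInf) [μ.IsAddHaarMeasure] [IsProbabilityMeasure μ]
    (A : ℝ) (hA : 0 ≤ A)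
    (hACF : ∀ (ε : ℕ → ℤ), (∀ m, ε m = 1 ∨ ε m = -1) →
      ∀ (F : Finset Zinf) (a : Zinf → X),
        eLpNorm (fun θ : TorusInf =>
            ∑ J ∈ F, (-I * (sgnOrder (Pe ε) J : ℂ) * charJ J θ) • a J) p μ ≤
          ENNReal.ofReal A *
            eLpNorm (fun θ : TorusInf => ∑ J ∈ F, charJ J θ • a J) p μ)
    (n : ℕ) (hn : 1 ≤ n) (K : ℕ → Finset Zinf)
    (hK : ∀ k ∈ Finset.Icc 1 n, ∀ J ∈ K k, J ∈ Zn k \ Zn (k - 1))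
    (a : Zinf → X) (ε : ℕ → ℤ) (hε : ∀ k, ε k = 1 ∨ ε k = -1) :
    eLpNorm (fun θ : TorusInf =>
        ∑ k ∈ Finset.Icc 1 n, (ε k : ℂ) • ∑ J ∈ K k, charJ J θ • a J) p μ ≤
      ENNReal.ofReal (A ^ 2) *
        eLpNorm (fun θ : TorusInf =>
          ∑ k ∈ Finset.Icc 1 n, ∑ J ∈ K k, charJ J θ • a J) p μ := by
  classical
  set one : ℕ → ℤ := fun _ => 1 with hone
  have hone' : ∀ m, one m = 1 ∨ one m = -1 := fun m => Or.inl rfl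
  set F : Finset Zinf := (Finset.Icc 1 n).biUnion K with hF
  -- index facts
  have hidx : ∀ k ∈ Finset.Icc 1 n, ∀ J ∈ K k, nIdx J = k := by
    intro k hk J hJ
    obtain ⟨h1, h2⟩ := hK k hk J hJ
    have hk1 : 1 ≤ k := (Finset.mem_Icc.mp hk).1
    simp only [Zn, Set.mem_setOf_eq, Set.mem_compl_iff, not_le] at h1 h2
    omega
  have hdisj : (↑(Finset.Icc 1 n) : Set ℕ).PairwiseDisjoint K := by
    intro k hk l hl hkl
    simp only [Finset.coe_mem, Finset.mem_coe] at hk hl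
    refine Finset.disjoint_left.mpr fun J hJk hJl => hkl ?_
    rw [← hidx k hk J hJk, hidx l hl J hJl]
  have hFne : ∀ J ∈ F, J ≠ (0 : Zinf) := by
    intro J hJ
    obtain ⟨k, hk, hJk⟩ := Finset.mem_biUnion.mp hJ
    intro h0
    have := hidx k hk J hJk
    rw [h0, nIdx_zero] at this
    have : 1 ≤ k := (Finset.mem_Icc.mp hk).1
    omega
  -- the auxiliary coefficients (coefficients of T_P f)
  set a' : Zinf → X := fun J => (-I * (sgnOrder (Pe one) J : ℂ)) • a J with ha'
  -- First application: T_P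
  have h1 := hACF one hone' F a
  -- Second application: T_{P(ε)} applied to T_P f
  have h2 := hACF ε hε F a'
  -- RHS of h2 equals LHS of h1
  have hg : (fun θ : TorusInf => ∑ J ∈ F, charJ J θ • a' J) =
      (fun θ : TorusInf => ∑ J ∈ F, (-I * (sgnOrder (Pe one) J : ℂ) * charJ J θ) • a J) := by
    funext θ
    refine Finset.sum_congr rfl fun J _ => ?_
    rw [ha', smul_smul]
    ring_nf
  rw [hg] at h2
  -- LHS of h2 equals minus the martingale transform
  have hlhs : (fun θ : TorusInf =>
      ∑ J ∈ F, (-I * (sgnOrder (Pe ε) J : ℂ) * charJ J θ) • a' J) =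
      fun θ : TorusInf =>
        -(∑ k ∈ Finset.Icc 1 n, (ε k : ℂ) • ∑ J ∈ K k, charJ J θ • a J) := by
    funext θ
    have step1 : ∀ J ∈ F, (-I * (sgnOrder (Pe ε) J : ℂ) * charJ J θ) • a' J =
        -((ε (nIdx J) : ℂ) • (charJ J θ • a J)) := by
      intro J hJ
      have hJ0 := hFne J hJ
      rw [ha', smul_smul]
      have hsg := sgn_mul_sgn hε hJ0
      have : -I * (sgnOrder (Pe ε) J : ℂ) * charJ J θ * (-I * (sgnOrder (Pe one) J : ℂ)) =
          -((ε (nIdx J) : ℂ) * charJ J θ) := by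
        have hI : I * I = -1 := I_mul_I
        have : ((sgnOrder (Pe ε) J : ℂ)) * ((sgnOrder (Pe one) J : ℂ)) = ((ε (nIdx J) : ℂ)) := by
          rw [← Complex.ofReal_mul, hsg]
          push_cast
          ring
        calc -I * (sgnOrder (Pe ε) J : ℂ) * charJ J θ * (-I * (sgnOrder (Pe one) J : ℂ))
            = (I * I) * ((sgnOrder (Pe ε) J : ℂ) * (sgnOrder (Pe one) J : ℂ)) * charJ J θ := by
              ring
          _ = -((ε (nIdx J) : ℂ) * charJ J θ) := by rw [hI, this]; ring
      rw [this, neg_smul, mul_smul]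
    rw [Finset.sum_congr rfl step1, ← Finset.sum_neg_distrib]
    rw [hF, Finset.sum_biUnion hdisj]
    refine Finset.sum_congr rfl fun k hk => ?_
    rw [Finset.smul_sum, ← Finset.sum_neg_distrib]
    exact Finset.sum_congr rfl fun J hJ => by rw [hidx k hk J hJ]
  rw [hlhs] at h2
  -- RHS of h1 : sum over F equals target RHS
  have hrhs : (fun θ : TorusInf => ∑ J ∈ F, charJ J θ • a J) =
      (fun θ : TorusInf => ∑ k ∈ Finset.Icc 1 n, ∑ J ∈ K k, charJ J θ • a J) := by
    funext θ
    rw [hF, Finset.sum_biUnion hdisj]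
  rw [hrhs] at h1
  -- put it together
  have hneg : eLpNorm (fun θ : TorusInf =>
      -(∑ k ∈ Finset.Icc 1 n, (ε k : ℂ) • ∑ J ∈ K k, charJ J θ • a J)) p μ =
      eLpNorm (fun θ : TorusInf =>
      ∑ k ∈ Finset.Icc 1 n, (ε k : ℂ) • ∑ J ∈ K k, charJ J θ • a J) p μ := by
    exact eLpNorm_neg _ _ _
  rw [hneg] at h2
  calc eLpNorm (fun θ : TorusInf =>
        ∑ k ∈ Finset.Icc 1 n, (ε k : ℂ) • ∑ J ∈ K k, charJ J θ • a J) p μ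
      ≤ ENNReal.ofReal A * eLpNorm (fun θ : TorusInf =>
          ∑ J ∈ F, (-I * (sgnOrder (Pe one) J : ℂ) * charJ J θ) • a J) p μ := h2
    _ ≤ ENNReal.ofReal A * (ENNReal.ofReal A * eLpNorm (fun θ : TorusInf =>
          ∑ k ∈ Finset.Icc 1 n, ∑ J ∈ K k, charJ J θ • a J) p μ) :=
        mul_le_mul_right h1 _
    _ = ENNReal.ofReal (A ^ 2) * eLpNorm (fun θ : TorusInf =>
          ∑ k ∈ Finset.Icc 1 n, ∑ J ∈ K k, charJ J θ • a J) p μ := by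
        rw [← mul_assoc, ← ENNReal.ofReal_mul hA, sq]
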